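/- Consider the reduction dataset built from a 2-CNF formula F over n variables with m clauses, where m < n², and let 0 ≤ r ≤ m. If there exist w ∈ ℝ^n with all coordinates nonzero and a bonus vector v on the dataset with at most m − r nonzero values such that the adjusted scores are non-increasing along the ranking π of the reduction, then there exists an assignment τ and at least r clause indices such that, for each of these clauses, exactly one of its two literals is true under τ. -/

import Mathlib

/-- The position (0-indexed) of the clause point `p_i` in the ranking `π` of the
reduction: the dataset consists of `(m+1)·n²` zero points and `m` clause points,
listed as `n²` zeros, `p_1`, `n²` zeros, `p_2`, …, `p_m`, `n²` zeros. -/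
def clauseIdx (n m : ℕ) (i : Fin m) : Fin ((m + 1) * n ^ 2 + m) :=
  ⟨((i : ℕ) + 1) * n ^ 2 + (i : ℕ), by
    have h1 : ((i : ℕ) + 1) * n ^ 2 ≤ (m + 1) * n ^ 2 :=
      Nat.mul_le_mul_right _ (Nat.succ_le_succ i.isLt.le)
    exact add_lt_add_of_le_of_lt h1 i.isLt⟩

/-- The literal with sign `s ∈ {1, −1}` on a variable with truth value `b` is true:
a positive literal (`s = 1`) is true when `b = true`, a negated literal (`s = −1`)
is true when `b = false`. -/
def litTrue (s : ℝ) (b : Bool) : Prop :=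
  (s = 1 ∧ b = true) ∨ (s = -1 ∧ b = false)

/-!
Set `N = n²`. At most `m - r < N` points carry a nonzero bonus, so each of the `m + 1` blocks of
`N` zero points contains a zero point with adjusted score `0`. Every clause point lies between two
such points, so its adjusted score is `0`. For the at least `r` clause points with zero bonus this
says `w_a s_a + w_b s_b = 0` with both terms nonzero, hence exactly one term is positive; a
literal `s x_j` has a positive term exactly when it is true under `τ(x_j) := (0 < w_j)`.
-/

open Finset Function

theorem card_filter_comp_le_of_injective {α β : Type*} [Fintype α] [Fintype β] {f : α → β}
    (hf : Injective f) (P : β → Prop) [DecidablePred P] :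
    #{a | P (f a)} ≤ #{b | P b} :=
  card_le_card_of_injOn f (fun a ha => by simpa using ha) hf.injOn

theorem Fin.exists_notMem_of_card_lt {L : ℕ} (S : Finset (Fin L)) {a N : ℕ} (hS : #S < N)
    (haN : a + N ≤ L) : ∃ x : Fin L, a ≤ x ∧ (x : ℕ) < a + N ∧ x ∉ S := by
  have hcard : #(S.map Fin.valEmbedding) < #(Ico a (a + N)) := by simpa using hS
  obtain ⟨y, hy, hyS⟩ := exists_mem_notMem_of_card_lt_card hcard
  rw [mem_Ico] at hy
  exact ⟨⟨y, by omega⟩, hy.1, hy.2, fun h => hyS (mem_map_of_mem _ h)⟩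

theorem sum_mul_ite_add_ite {ι R : Type*} [Fintype ι] [DecidableEq ι]
    [NonUnitalNonAssocSemiring R] (w : ι → R) (a b : ι) (s t : R) :
    ∑ j, w j * ((if j = a then s else 0) + (if j = b then t else 0)) = w a * s + w b * t := by
  simp [mul_add, sum_add_distrib]

theorem xor_pos_of_add_eq_zero {α : Type*} [AddCommGroup α] [LinearOrder α]
    [IsOrderedAddMonoid α] {a b : α} (ha : a ≠ 0) (hab : a + b = 0) : Xor (0 < a) (0 < b) := by
  rw [← neg_eq_of_add_eq_zero_right hab, Left.neg_pos_iff]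
  rcases ha.lt_or_gt with h | h
  · exact Or.inr ⟨h, h.not_gt⟩
  · exact Or.inl ⟨h, h.not_gt⟩

theorem litTrue_decide_pos_iff {s w : ℝ} (hs : s = 1 ∨ s = -1) (hw : w ≠ 0) :
    litTrue s (decide (0 < w)) ↔ 0 < w * s := by
  rcases hs with rfl | rfl <;> norm_num [litTrue, hw.le_iff_lt]

section Reduction

variable {n m : ℕ}

theorem clauseIdx_val (i : Fin m) : (clauseIdx n m i : ℕ) = i * (n ^ 2 + 1) + n ^ 2 := by
  simp only [clauseIdx]
  ring

theorem clauseIdx_injective : Injective (clauseIdx n m) := by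
  intro i i' h
  have h' := congrArg Fin.val h
  rw [clauseIdx_val, clauseIdx_val, add_left_inj] at h'
  exact Fin.ext (Nat.eq_of_mul_eq_mul_right (Nat.succ_pos _) h')

theorem ne_clauseIdx_of_mem_block {k : ℕ} {x : Fin ((m + 1) * n ^ 2 + m)}
    (hlo : k * (n ^ 2 + 1) ≤ x) (hhi : (x : ℕ) < k * (n ^ 2 + 1) + n ^ 2) (i : Fin m) :
    x ≠ clauseIdx n m i := by
  have hmod : (x : ℕ) % (n ^ 2 + 1) < n ^ 2 := by
    obtain ⟨t, ht⟩ := Nat.exists_eq_add_of_le hlo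
    rw [ht, Nat.mul_add_mod_of_lt (by omega)]
    omega
  rintro rfl
  rw [clauseIdx_val, Nat.mul_add_mod_of_lt (Nat.lt_succ_self _)] at hmod
  exact hmod.false

def adjustedScore {ι κ : Type*} [Fintype κ] (w : κ → ℝ) (D : ι → κ → ℝ) (V : ι → ℝ)
    (x : ι) : ℝ :=
  ∑ j, w j * D x j + V x

variable {D : Fin ((m + 1) * n ^ 2 + m) → Fin n → ℝ} {V : Fin ((m + 1) * n ^ 2 + m) → ℝ}

theorem exists_adjustedScore_eq_zero_of_mem_block (w : Fin n → ℝ)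
    (hD : ∀ x, (∀ i, x ≠ clauseIdx n m i) → D x = 0) (hV : #{x | V x ≠ 0} < n ^ 2)
    {k : ℕ} (hk : k ≤ m) :
    ∃ x : Fin ((m + 1) * n ^ 2 + m), k * (n ^ 2 + 1) ≤ x ∧
      (x : ℕ) < k * (n ^ 2 + 1) + n ^ 2 ∧ adjustedScore w D V x = 0 := by
  have hfit : k * (n ^ 2 + 1) + n ^ 2 ≤ (m + 1) * n ^ 2 + m := by nlinarith
  obtain ⟨x, hlo, hhi, hVx⟩ := Fin.exists_notMem_of_card_lt _ hV hfit
  have hDx : D x = 0 := hD x (ne_clauseIdx_of_mem_block hlo hhi)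
  refine ⟨x, hlo, hhi, ?_⟩
  simpa [adjustedScore, hDx] using hVx

theorem adjustedScore_clauseIdx_eq_zero {w : Fin n → ℝ}
    (hD : ∀ x, (∀ i, x ≠ clauseIdx n m i) → D x = 0) (hV : #{x | V x ≠ 0} < n ^ 2)
    (hmono : Antitone (adjustedScore w D V)) (i : Fin m) :
    adjustedScore w D V (clauseIdx n m i) = 0 := by
  obtain ⟨x, -, hx, hx0⟩ := exists_adjustedScore_eq_zero_of_mem_block w hD hV i.isLt.le
  obtain ⟨y, hy, -, hy0⟩ :=
    exists_adjustedScore_eq_zero_of_mem_block w hD hV (k := i + 1) i.isLt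
  have hxi : x ≤ clauseIdx n m i := by
    rw [Fin.le_def, clauseIdx_val]
    omega
  have hiy : clauseIdx n m i ≤ y := by
    rw [Fin.le_def, clauseIdx_val]
    have hsucc : (i + 1) * (n ^ 2 + 1) = i * (n ^ 2 + 1) + n ^ 2 + 1 := by ring
    omega
  linarith [hmono hxi, hmono hiy]

end Reduction

theorem stmt_4_general (n m r : ℕ) (hm : m < n ^ 2) (hr : r ≤ m)
    (va vb : Fin m → Fin n) (sa sb : Fin m → ℝ)
    (hsa : ∀ i, sa i = 1 ∨ sa i = -1) (hsb : ∀ i, sb i = 1 ∨ sb i = -1)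
    (p : Fin m → Fin n → ℝ)
    (hp : ∀ i j, p i j =
      (if j = va i then sa i else 0) + (if j = vb i then sb i else 0))
    (D : Fin ((m + 1) * n ^ 2 + m) → Fin n → ℝ)
    (hD1 : ∀ i, D (clauseIdx n m i) = p i)
    (hD2 : ∀ idx, (∀ i, idx ≠ clauseIdx n m i) → D idx = 0)
    (w : Fin n → ℝ) (hw : ∀ j, w j ≠ 0)
    (V : Fin ((m + 1) * n ^ 2 + m) → ℝ)
    (hVcard : (Finset.univ.filter fun idx => V idx ≠ 0).card ≤ m - r)
    (hreal : ∀ idx idx' : Fin ((m + 1) * n ^ 2 + m), idx ≤ idx' →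
      (∑ j, w j * D idx' j) + V idx' ≤ (∑ j, w j * D idx j) + V idx) :
    ∃ τ : Fin n → Bool, ∃ R : Finset (Fin m), r ≤ R.card ∧
      ∀ i ∈ R, Xor' (litTrue (sa i) (τ (va i))) (litTrue (sb i) (τ (vb i))) := by
  refine ⟨fun j => decide (0 < w j), ({i | V (clauseIdx n m i) = 0} : Finset _), ?_, ?_⟩
  · have hsplit := card_filter_add_card_filter_not (s := univ)
      (p := fun i => V (clauseIdx n m i) = 0)
    have hbonus := card_filter_comp_le_of_injective clauseIdx_injective (fun x => V x ≠ 0)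
    rw [card_univ, Fintype.card_fin] at hsplit
    simp only [ne_eq] at hbonus hVcard
    omega
  · intro i hi
    have hscore := adjustedScore_clauseIdx_eq_zero hD2 (by omega) (fun _ _ h => hreal _ _ h) i
    simp only [adjustedScore, hD1, hp, sum_mul_ite_add_ite, (mem_filter.1 hi).2,
      add_zero] at hscore
    have hsa0 : sa i ≠ 0 := by rcases hsa i with h | h <;> norm_num [h]
    rw [litTrue_decide_pos_iff (hsa i) (hw _), litTrue_decide_pos_iff (hsb i) (hw _)]
    exact xor_pos_of_add_eq_zero (mul_ne_zero (hw _) hsa0) hscore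

/-- soundness of the reduction: for the reduction dataset of a 2-CNF
formula with `m < n²` clauses and `0 ≤ r ≤ m`, if some `w ∈ ℝ^n` with all coordinates
nonzero and some bonus vector `V` with at most `m − r` nonzero values make the adjusted
scores non-increasing along the ranking `π`, then some assignment `τ` makes exactly one
literal true in each of at least `r` clauses. -/
theorem stmt_4 (n m r : ℕ) (hm : m < n ^ 2) (hr : r ≤ m)
    (va vb : Fin m → Fin n) (sa sb : Fin m → ℝ)
    (hvab : ∀ i, va i ≠ vb i)
    (hsa : ∀ i, sa i = 1 ∨ sa i = -1) (hsb : ∀ i, sb i = 1 ∨ sb i = -1)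
    (p : Fin m → Fin n → ℝ)
    (hp : ∀ i j, p i j =
      (if j = va i then sa i else 0) + (if j = vb i then sb i else 0))
    (D : Fin ((m + 1) * n ^ 2 + m) → Fin n → ℝ)
    (hD1 : ∀ i, D (clauseIdx n m i) = p i)
    (hD2 : ∀ idx, (∀ i, idx ≠ clauseIdx n m i) → D idx = 0)
    (w : Fin n → ℝ) (hw : ∀ j, w j ≠ 0)
    (V : Fin ((m + 1) * n ^ 2 + m) → ℝ)
    (hVcard : (Finset.univ.filter fun idx => V idx ≠ 0).card ≤ m - r)
    (hreal : ∀ idx idx' : Fin ((m + 1) * n ^ 2 + m), idx ≤ idx' →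
      (∑ j, w j * D idx' j) + V idx' ≤ (∑ j, w j * D idx j) + V idx) :
    ∃ τ : Fin n → Bool, ∃ R : Finset (Fin m), r ≤ R.card ∧
      ∀ i ∈ R, Xor' (litTrue (sa i) (τ (va i))) (litTrue (sb i) (τ (vb i))) :=
  stmt_4_general n m r hm hr va vb sa sb hsa hsb p hp D hD1 hD2 w hw V hVcard hreal
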